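/- arXiv:math/0209263 — 3 statements merged into one kernel-verified Lean document; each statement's English description precedes it below -/
import Mathlib

section
/- The spaces Val_k(V) of translation invariant continuous valuations homogeneous of degree k, for k = 0, 1, …, n = dim V, form independent subspaces of Val(V): if φ₀ + φ₁ + ⋯ + φ_n = 0 with φ_k ∈ Val_k(V) for each k, then each φ_k = 0. -/
open Pointwise MeasureTheory

/-- A (nonempty) convex body in `V`. -/
def IsConvBody {V : Type*} [NormedAddCommGroup V] [NormedSpace ℝ V] (K : Set V) : Prop :=
  K.Nonempty ∧ IsCompact K ∧ Convex ℝ K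

/-- The valuation (inclusion-exclusion) property on convex bodies. -/
def IsValuation {V : Type*} [NormedAddCommGroup V] [NormedSpace ℝ V] (φ : Set V → ℂ) : Prop :=
  ∀ K L : Set V, IsConvBody K → IsConvBody L → Convex ℝ (K ∪ L) →
    φ (K ∪ L) + φ (K ∩ L) = φ K + φ L

/-- Translation invariance on convex bodies. -/
def IsTransInv {V : Type*} [NormedAddCommGroup V] [NormedSpace ℝ V] (φ : Set V → ℂ) : Prop :=
  ∀ (x : V) (K : Set V), IsConvBody K → φ ((x + ·) '' K) = φ K

/-- Continuity with respect to the Hausdorff metric on convex bodies. -/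
def IsHausdorffCont {V : Type*} [NormedAddCommGroup V] [NormedSpace ℝ V] (φ : Set V → ℂ) : Prop :=
  ∀ K : Set V, IsConvBody K → ∀ ε : ℝ, 0 < ε → ∃ δ : ℝ, 0 < δ ∧
    ∀ L : Set V, IsConvBody L → Metric.hausdorffDist K L < δ → ‖φ L - φ K‖ < ε

/-- Homogeneity of degree `k ∈ ℕ` on convex bodies. -/
def IsHomogOfDeg {V : Type*} [NormedAddCommGroup V] [NormedSpace ℝ V] (k : ℕ)
    (φ : Set V → ℂ) : Prop :=
  ∀ c : ℝ, 0 < c → ∀ K : Set V, IsConvBody K → φ (c • K) = (c : ℂ) ^ k * φ K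

/- Evaluating `∑ φ k = 0` on the dilates `c • K`, homogeneity turns it into
`∑ₖ φ k K · cᵏ = 0` for every `c > 0`: a polynomial in `c` with infinitely many roots, so all
its coefficients `φ k K` vanish. -/

open Polynomial in
theorem eq_zero_of_sum_mul_pow_eq_zero_of_infinite {R : Type*} [CommRing R] [IsDomain R]
    {s : Set R} (hs : s.Infinite) {N : ℕ} {a : ℕ → R}
    (h : ∀ x ∈ s, ∑ j ∈ Finset.range N, a j * x ^ j = 0) {j : ℕ} (hj : j < N) : a j = 0 := by
  set p : R[X] := ∑ i ∈ Finset.range N, C (a i) * X ^ i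
  have hp : p = 0 := p.eq_zero_of_infinite_isRoot <| hs.mono fun x hx => by
    simpa [p, eval_finsetSum] using h x hx
  have hcoeff : p.coeff j = a j := by simp [p, hj]
  rw [← hcoeff, hp, coeff_zero]

theorem IsConvBody.smul {V : Type*} [NormedAddCommGroup V] [NormedSpace ℝ V] {K : Set V}
    (hK : IsConvBody K) (c : ℝ) : IsConvBody (c • K) :=
  ⟨hK.1.smul_set, hK.2.1.smul c, hK.2.2.smul c⟩

theorem mcmullen_homogeneous_components_independent_general
    {V : Type*} [NormedAddCommGroup V] [NormedSpace ℝ V]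
    (n : ℕ)
    (φ : ℕ → Set V → ℂ)
    (hhom : ∀ k ≤ n, IsHomogOfDeg k (φ k))
    (hsum : ∀ K : Set V, IsConvBody K → ∑ k ∈ Finset.range (n + 1), φ k K = 0) :
    ∀ k ≤ n, ∀ K : Set V, IsConvBody K → φ k K = 0 := by
  intro k hk K hK
  have hpos_infinite : ((↑) '' Set.Ioi (0 : ℝ) : Set ℂ).Infinite :=
    (Set.Ioi_infinite 0).image Complex.ofReal_injective.injOn
  refine eq_zero_of_sum_mul_pow_eq_zero_of_infinite (a := fun j => φ j K) hpos_infinite ?_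
    (Nat.lt_succ_of_le hk)
  rintro _ ⟨c, hc, rfl⟩
  rw [← hsum _ (hK.smul c)]
  refine Finset.sum_congr rfl fun j hj => ?_
  rw [hhom j (Nat.lt_succ_iff.mp (Finset.mem_range.mp hj)) c hc K hK, mul_comm]

/-- independence part of McMullen's decomposition: if translation invariant
continuous valuations `φ k`, homogeneous of degree `k` for `k = 0, …, n = dim V`, sum to
zero, then each of them vanishes. -/
theorem mcmullen_homogeneous_components_independent
    {V : Type*} [NormedAddCommGroup V] [NormedSpace ℝ V] [FiniteDimensional ℝ V]
    (n : ℕ) (hn : n = Module.finrank ℝ V)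
    (φ : ℕ → Set V → ℂ)
    (hval : ∀ k ≤ n, IsValuation (φ k))
    (hti : ∀ k ≤ n, IsTransInv (φ k))
    (hcont : ∀ k ≤ n, IsHausdorffCont (φ k))
    (hhom : ∀ k ≤ n, IsHomogOfDeg k (φ k))
    (hsum : ∀ K : Set V, IsConvBody K → ∑ k ∈ Finset.range (n + 1), φ k K = 0) :
    ∀ k ≤ n, ∀ K : Set V, IsConvBody K → φ k K = 0 :=
  mcmullen_homogeneous_components_independent_general n φ hhom hsum
end

section
/- Let E and F be linear subspaces of a Euclidean space V with dim E = dim F = i. Define |cos(E,F)| = vol_i(Pr_F(A)) / vol_i(A), where A ⊆ E is any measurable subset of positive i-dimensional volume and Pr_F is orthogonal projection onto F. Then this quantity is independent of the choice of A, and |cos(E,F)| = |cos(E^⊥, F^⊥)|, where E^⊥, F^⊥ are the orthogonal complements. -/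
/-!
Restricted to `E`, the projection `Pr_F` is a linear map `E → F`, so it multiplies
`i`-dimensional Hausdorff measure by a constant: its norm determinant, `|det ⟪f_r, e_c⟫|` for
orthonormal bases `(e_c)` of `E` and `(f_r)` of `F`. This gives independence of `A`.

For the complements, glue orthonormal bases of `E, Eᗮ` and of `F, Fᗮ` into two orthonormal bases
of `V`. The change-of-basis matrix `[[P, *], [Q, R]]` is orthogonal and its diagonal blocks are
the matrices of the projections `E → F` and `Eᗮ → Fᗮ`. Orthogonality gives `PᵀP = 1 - QᵀQ` and
`RRᵀ = 1 - QQᵀ`, and `det (1 - QᵀQ) = det (1 - QQᵀ)`, so `|det P| = |det R|`.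
-/

open MeasureTheory Module

namespace Matrix

variable {R m n : Type*} [CommRing R] [Fintype m] [Fintype n] [DecidableEq m] [DecidableEq n]

theorem det_toBlocks₁₁_sq_eq_det_toBlocks₂₂_sq {M : Matrix (m ⊕ n) (m ⊕ n) R}
    (hM : Mᵀ * M = 1) : M.toBlocks₁₁.det ^ 2 = M.toBlocks₂₂.det ^ 2 := by
  obtain ⟨A, B, C, D, rfl⟩ : ∃ A B C D, M = fromBlocks A B C D :=
    ⟨_, _, _, _, (fromBlocks_toBlocks M).symm⟩
  have hM' := mul_eq_one_comm.mp hM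
  rw [fromBlocks_transpose, fromBlocks_multiply, ← fromBlocks_one, fromBlocks_inj] at hM hM'
  have hA : Aᵀ * A = 1 + (-Cᵀ) * C := by rw [Matrix.neg_mul, ← hM.1]; abel
  have hD : D * Dᵀ = 1 + C * (-Cᵀ) := by rw [Matrix.mul_neg, ← hM'.2.2.2]; abel
  calc (fromBlocks A B C D).toBlocks₁₁.det ^ 2 = (Aᵀ * A).det := by
        rw [toBlocks_fromBlocks₁₁, det_mul, det_transpose, sq]
    _ = (D * Dᵀ).det := by rw [hA, hD, det_one_add_mul_comm]
    _ = (fromBlocks A B C D).toBlocks₂₂.det ^ 2 := by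
        rw [toBlocks_fromBlocks₂₂, det_mul, det_transpose, sq]

end Matrix

namespace OrthonormalBasis

variable {𝕜 V ι κ : Type*} [RCLike 𝕜] [NormedAddCommGroup V] [InnerProductSpace 𝕜 V]
  [Fintype ι] [Fintype κ] {K : Submodule 𝕜 V}

theorem span_range_coe_eq (b : OrthonormalBasis ι 𝕜 K) :
    Submodule.span 𝕜 (Set.range fun i ↦ (b i : V)) = K := by
  rw [Set.range_comp' Subtype.val, ← Submodule.coe_subtype, Submodule.span_image,
    ← b.coe_toBasis, b.toBasis.span_eq, Submodule.map_top, Submodule.range_subtype]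

theorem orthonormal_sum_elim_orthogonal (b : OrthonormalBasis ι 𝕜 K)
    (b' : OrthonormalBasis κ 𝕜 Kᗮ) :
    Orthonormal 𝕜 (Sum.elim (fun i ↦ (b i : V)) (fun j ↦ (b' j : V))) := by
  classical
  rw [orthonormal_iff_ite]
  rintro (i | i) (j | j)
  · simpa using orthonormal_iff_ite.mp (b.orthonormal.comp_linearIsometry K.subtypeₗᵢ) i j
  · simpa using Submodule.inner_right_of_mem_orthogonal (b i).2 (b' j).2
  · simpa using Submodule.inner_left_of_mem_orthogonal (b j).2 (b' i).2
  · simpa using orthonormal_iff_ite.mp (b'.orthonormal.comp_linearIsometry Kᗮ.subtypeₗᵢ) i j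

variable [K.HasOrthogonalProjection]

noncomputable def sumOrthogonal (b : OrthonormalBasis ι 𝕜 K) (b' : OrthonormalBasis κ 𝕜 Kᗮ) :
    OrthonormalBasis (ι ⊕ κ) 𝕜 V :=
  .mk (orthonormal_sum_elim_orthogonal b b') <| by
    rw [Set.Sum.elim_range, Submodule.span_union, span_range_coe_eq, span_range_coe_eq,
      Submodule.sup_orthogonal_of_hasOrthogonalProjection]

@[simp]
theorem sumOrthogonal_inl (b : OrthonormalBasis ι 𝕜 K) (b' : OrthonormalBasis κ 𝕜 Kᗮ) (i : ι) :
    b.sumOrthogonal b' (.inl i) = b i := by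
  simp [sumOrthogonal]

@[simp]
theorem sumOrthogonal_inr (b : OrthonormalBasis ι 𝕜 K) (b' : OrthonormalBasis κ 𝕜 Kᗮ) (j : κ) :
    b.sumOrthogonal b' (.inr j) = b' j := by
  simp [sumOrthogonal]

end OrthonormalBasis

namespace Submodule

variable {V : Type*} [NormedAddCommGroup V] [InnerProductSpace ℝ V]

/-- `|cos(E, F)|` in the paper's notation. -/
noncomputable def absCos (E F : Submodule ℝ V) [FiniteDimensional ℝ E]
    [F.HasOrthogonalProjection] : ℝ :=
  ((F.orthogonalProjectionOnto : V →ₗ[ℝ] F) ∘ₗ E.subtype).normDet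

section Matrices

variable {ι κ : Type*} [Fintype ι] [Fintype κ] {E F : Submodule ℝ V}

theorem toMatrix_orthogonalProjectionOnto_comp_subtype [DecidableEq ι]
    [F.HasOrthogonalProjection] (bE : OrthonormalBasis ι ℝ E) (bF : OrthonormalBasis κ ℝ F) :
    ((F.orthogonalProjectionOnto : V →ₗ[ℝ] F) ∘ₗ E.subtype).toMatrix bE.toBasis bF.toBasis =
      Matrix.of fun r c ↦ inner ℝ (bF r : V) (bE c : V) := by
  ext r c
  simp only [LinearMap.toMatrix_apply, OrthonormalBasis.coe_toBasis_repr_apply,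
    OrthonormalBasis.coe_toBasis, OrthonormalBasis.repr_apply_apply, LinearMap.coe_comp,
    Function.comp_apply, Submodule.coe_subtype, ContinuousLinearMap.coe_coe,
    inner_orthogonalProjectionOnto_eq_of_mem_left, Matrix.of_apply]

variable [E.HasOrthogonalProjection] [F.HasOrthogonalProjection]

theorem toBlocks₁₁_toMatrix_sumOrthogonal [DecidableEq ι] (bE : OrthonormalBasis ι ℝ E)
    (bF : OrthonormalBasis ι ℝ F) (bE' : OrthonormalBasis κ ℝ Eᗮ) (bF' : OrthonormalBasis κ ℝ Fᗮ) :
    ((bF.sumOrthogonal bF').toBasis.toMatrix (bE.sumOrthogonal bE')).toBlocks₁₁ =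
      ((F.orthogonalProjectionOnto : V →ₗ[ℝ] F) ∘ₗ E.subtype).toMatrix bE.toBasis bF.toBasis := by
  ext r c
  simp [Basis.toMatrix_apply, OrthonormalBasis.repr_apply_apply, Matrix.toBlocks₁₁,
    toMatrix_orthogonalProjectionOnto_comp_subtype]

theorem toBlocks₂₂_toMatrix_sumOrthogonal [DecidableEq κ] (bE : OrthonormalBasis ι ℝ E)
    (bF : OrthonormalBasis ι ℝ F) (bE' : OrthonormalBasis κ ℝ Eᗮ) (bF' : OrthonormalBasis κ ℝ Fᗮ) :
    ((bF.sumOrthogonal bF').toBasis.toMatrix (bE.sumOrthogonal bE')).toBlocks₂₂ =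
      ((Fᗮ.orthogonalProjectionOnto : V →ₗ[ℝ] Fᗮ) ∘ₗ Eᗮ.subtype).toMatrix
        bE'.toBasis bF'.toBasis := by
  ext r c
  simp [Basis.toMatrix_apply, OrthonormalBasis.repr_apply_apply, Matrix.toBlocks₂₂,
    toMatrix_orthogonalProjectionOnto_comp_subtype]

end Matrices

theorem absCos_orthogonal [FiniteDimensional ℝ V] {E F : Submodule ℝ V}
    (h : finrank ℝ E = finrank ℝ F) : absCos Eᗮ Fᗮ = absCos E F := by
  have h' : finrank ℝ Eᗮ = finrank ℝ Fᗮ := by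
    have := E.finrank_add_finrank_orthogonal
    have := F.finrank_add_finrank_orthogonal
    omega
  let bE := stdOrthonormalBasis ℝ E
  let bF := (stdOrthonormalBasis ℝ F).reindex (finCongr h.symm)
  let bE' := stdOrthonormalBasis ℝ Eᗮ
  let bF' := (stdOrthonormalBasis ℝ Fᗮ).reindex (finCongr h'.symm)
  have hM := (bF.sumOrthogonal bF').toMatrix_orthonormalBasis_conjTranspose_mul_self
    (bE.sumOrthogonal bE')
  rw [Matrix.conjTranspose_eq_transpose_of_trivial] at hM
  rw [absCos, absCos, LinearMap.normDet_eq_norm_det_toMatrix _ bE bF,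
    LinearMap.normDet_eq_norm_det_toMatrix _ bE' bF',
    ← toBlocks₁₁_toMatrix_sumOrthogonal _ _ bE' bF', ← toBlocks₂₂_toMatrix_sumOrthogonal bE bF,
    Real.norm_eq_abs, Real.norm_eq_abs, ← sq_eq_sq_iff_abs_eq_abs]
  exact (Matrix.det_toBlocks₁₁_sq_eq_det_toBlocks₂₂_sq hM).symm

theorem hausdorffMeasure_orthogonalProjectionOnto_image [MeasurableSpace V] [BorelSpace V]
    (E F : Submodule ℝ V) [FiniteDimensional ℝ E] [F.HasOrthogonalProjection] {A : Set V}
    (hA : A ⊆ E) :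
    μH[finrank ℝ E] ((fun x ↦ (F.orthogonalProjectionOnto x : V)) '' A) =
      ENNReal.ofReal (absCos E F) * μH[finrank ℝ E] A := by
  obtain ⟨s, rfl⟩ : ∃ s : Set E, (↑) '' s = A :=
    Set.subset_range_iff_exists_image_eq.mp (by simpa using hA)
  have hd : (0 : ℝ) ≤ finrank ℝ E := Nat.cast_nonneg _
  have himage : (fun x ↦ (F.orthogonalProjectionOnto x : V)) '' ((↑) '' s) =
      (↑) '' (((F.orthogonalProjectionOnto : V →ₗ[ℝ] F) ∘ₗ E.subtype) '' s) := by
    simp only [Set.image_image]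
    rfl
  rw [himage, isometry_subtype_coe.hausdorffMeasure_image (.inl hd),
    LinearMap.hausdorffMeasure_image, isometry_subtype_coe.hausdorffMeasure_image (.inl hd)]
  rfl

end Submodule

theorem cosine_of_angle_well_defined_and_complement_symmetric_general
    (n i : ℕ)
    (E F : Submodule ℝ (EuclideanSpace ℝ (Fin n)))
    (hE : Module.finrank ℝ E = i) (hF : Module.finrank ℝ F = i) :
    -- well-definedness: independence of the choice of the subset of `E`
    (∀ A B : Set (EuclideanSpace ℝ (Fin n)),
      A ⊆ (E : Set (EuclideanSpace ℝ (Fin n))) → MeasurableSet A → 0 < μH[(i : ℝ)] A →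
      B ⊆ (E : Set (EuclideanSpace ℝ (Fin n))) → MeasurableSet B → 0 < μH[(i : ℝ)] B →
      μH[(i : ℝ)] ((fun x => (Submodule.orthogonalProjection F x : EuclideanSpace ℝ (Fin n))) '' A)
          * μH[(i : ℝ)] B
        = μH[(i : ℝ)] ((fun x => (Submodule.orthogonalProjection F x : EuclideanSpace ℝ (Fin n))) '' B)
          * μH[(i : ℝ)] A) ∧
    -- `|cos(E,F)| = |cos(E^⊥,F^⊥)|`, in cross-multiplied form
    (∀ A A' : Set (EuclideanSpace ℝ (Fin n)),
      A ⊆ (E : Set (EuclideanSpace ℝ (Fin n))) → MeasurableSet A → 0 < μH[(i : ℝ)] A →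
      A' ⊆ (Eᗮ : Set (EuclideanSpace ℝ (Fin n))) → MeasurableSet A' →
        0 < μH[((n - i : ℕ) : ℝ)] A' →
      μH[(i : ℝ)] ((fun x => (Submodule.orthogonalProjection F x : EuclideanSpace ℝ (Fin n))) '' A)
          * μH[((n - i : ℕ) : ℝ)] A'
        = μH[((n - i : ℕ) : ℝ)]
            ((fun x => (Submodule.orthogonalProjection Fᗮ x : EuclideanSpace ℝ (Fin n))) '' A')
          * μH[(i : ℝ)] A) := by
  subst hE
  have hEperp : finrank ℝ Eᗮ = n - finrank ℝ E := by
    have := E.finrank_add_finrank_orthogonal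
    rw [finrank_euclideanSpace_fin] at this
    omega
  refine ⟨fun A B hA _ _ hB _ _ => ?_, fun A A' hA _ _ hA' _ _ => ?_⟩
  · rw [E.hausdorffMeasure_orthogonalProjectionOnto_image F hA,
      E.hausdorffMeasure_orthogonalProjectionOnto_image F hB]
    ring
  · rw [← hEperp, E.hausdorffMeasure_orthogonalProjectionOnto_image F hA,
      Eᗮ.hausdorffMeasure_orthogonalProjectionOnto_image Fᗮ hA',
      Submodule.absCos_orthogonal hF.symm]
    ring

/-- for `i`-dimensional subspaces `E, F` of Euclidean space, the ratio
`vol_i(Pr_F(A)) / vol_i(A)` (for `A ⊆ E` measurable of positive `i`-dimensional volume)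
is independent of `A`, and it agrees with the corresponding ratio for the orthogonal
complements `E^⊥, F^⊥`.  Both claims are stated in cross-multiplied form, using the
`i`-dimensional (resp. `(n-i)`-dimensional) Hausdorff measure. -/
theorem cosine_of_angle_well_defined_and_complement_symmetric
    (n i : ℕ) (hi₁ : 1 ≤ i) (hi₂ : i ≤ n - 1)
    (E F : Submodule ℝ (EuclideanSpace ℝ (Fin n)))
    (hE : Module.finrank ℝ E = i) (hF : Module.finrank ℝ F = i) :
    -- well-definedness: independence of the choice of the subset of `E`
    (∀ A B : Set (EuclideanSpace ℝ (Fin n)),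
      A ⊆ (E : Set (EuclideanSpace ℝ (Fin n))) → MeasurableSet A → 0 < μH[(i : ℝ)] A →
      B ⊆ (E : Set (EuclideanSpace ℝ (Fin n))) → MeasurableSet B → 0 < μH[(i : ℝ)] B →
      μH[(i : ℝ)] ((fun x => (Submodule.orthogonalProjection F x : EuclideanSpace ℝ (Fin n))) '' A)
          * μH[(i : ℝ)] B
        = μH[(i : ℝ)] ((fun x => (Submodule.orthogonalProjection F x : EuclideanSpace ℝ (Fin n))) '' B)
          * μH[(i : ℝ)] A) ∧
    -- `|cos(E,F)| = |cos(E^⊥,F^⊥)|`, in cross-multiplied form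
    (∀ A A' : Set (EuclideanSpace ℝ (Fin n)),
      A ⊆ (E : Set (EuclideanSpace ℝ (Fin n))) → MeasurableSet A → 0 < μH[(i : ℝ)] A →
      A' ⊆ (Eᗮ : Set (EuclideanSpace ℝ (Fin n))) → MeasurableSet A' →
        0 < μH[((n - i : ℕ) : ℝ)] A' →
      μH[(i : ℝ)] ((fun x => (Submodule.orthogonalProjection F x : EuclideanSpace ℝ (Fin n))) '' A)
          * μH[((n - i : ℕ) : ℝ)] A'
        = μH[((n - i : ℕ) : ℝ)]
            ((fun x => (Submodule.orthogonalProjection Fᗮ x : EuclideanSpace ℝ (Fin n))) '' A')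
          * μH[(i : ℝ)] A) :=
  cosine_of_angle_well_defined_and_complement_symmetric_general n i E F hE hF
end

section
/- In ℂ², let E₀ = span_ℝ{1, i} ⊂ ℍ ≅ ℂ² (identifying ℂ² with the quaternions ℍ = ℂ ⊕ jℂ). Identify the Grassmannian of oriented real 2-planes in ℝ⁴ with S² × S², where each S² is the sphere of radius 1/2 centered at (1/2,0,0) in ℝ³ and E₀ corresponds to ((1,0,0),(1,0,0)). Then for E corresponding to (t₁, t₂) with tᵢ = (xᵢ, yᵢ, zᵢ), the cosine of the angle between E and E₀ is |cos(E, E₀)| = |x₁ + x₂ − 1|. -/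
open MeasureTheory Quaternion

/-- Orthogonal projection of `ℍ ≅ ℝ⁴` onto the plane `E₀ = span_ℝ{1, i}`. -/
def projE0 : Quaternion ℝ → Quaternion ℝ := fun x => ⟨x.re, x.imI, 0, 0⟩

/-- The plane `E₀ = span_ℝ{1, i} ⊆ ℍ`. -/
def planeE0 : Set (Quaternion ℝ) := {x | x.imJ = 0 ∧ x.imK = 0}

/-- The quaternion unit `i`. -/
def quatI : Quaternion ℝ := ⟨0, 1, 0, 0⟩

/-- The sphere coordinate `x(q) = (1 + ⟨q i q⁻¹, i⟩)/2 ∈ [0,1]` of a unit quaternion `q`,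
giving the first coordinate of the corresponding point of the sphere of radius `1/2`
centered at `(1/2,0,0)` under the identification `SU(2)/T ≅ S²`. -/
noncomputable def sphX (q : Quaternion ℝ) : ℝ :=
  (1 + (q * quatI * q⁻¹).imI) / 2

/-! The map `z ↦ q₁ z q₂⁻¹` is an isometry from `ℂ = E₀` onto `E`, and its composite with the
projection onto `E₀ = ℂ` is a real-linear map `ℂ → ℂ`; since `μH[2]` on `ℂ` is a Haar measure,
the projection scales it by the absolute value of that map's determinant. A direct expansion
gives `x₁ + x₂ - 1` for this determinant, because for a unit quaternion `q` the coordinate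
`sphX q` equals `q.re ^ 2 + q.imI ^ 2`. -/

namespace Quaternion

lemma norm_coeComplex (z : ℂ) : ‖(z : ℍ[ℝ])‖ = ‖z‖ := by
  refine (sq_eq_sq₀ (norm_nonneg _) (norm_nonneg _)).1 ?_
  rw [sq, ← normSq_eq_norm_mul_self, normSq_def', Complex.sq_norm, Complex.normSq_apply]
  simp only [re_coeComplex, imI_coeComplex, imJ_coeComplex, imK_coeComplex]
  ring

lemma isometry_coeComplex : Isometry ((↑) : ℂ → ℍ[ℝ]) :=
  Isometry.of_dist_eq fun z w => by
    rw [dist_eq_norm, dist_eq_norm, ← norm_coeComplex]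
    congr 1
    ext <;> simp

lemma range_coeComplex : Set.range ((↑) : ℂ → ℍ[ℝ]) = {x | x.imJ = 0 ∧ x.imK = 0} := by
  ext x
  constructor
  · rintro ⟨z, rfl⟩
    exact ⟨imJ_coeComplex z, imK_coeComplex z⟩
  · rintro ⟨hj, hk⟩
    exact ⟨⟨x.re, x.imI⟩, by ext <;> simp [hj, hk]⟩

lemma normSq_eq_one_of_norm_eq_one {q : ℍ[ℝ]} (hq : ‖q‖ = 1) : normSq q = 1 := by
  rw [normSq_eq_norm_mul_self, hq, mul_one]

lemma inv_eq_star_of_norm_eq_one {q : ℍ[ℝ]} (hq : ‖q‖ = 1) : q⁻¹ = star q := by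
  rw [inv_def, normSq_eq_one_of_norm_eq_one hq, inv_one, one_smul]

end Quaternion

open Quaternion

lemma isometry_mul_mul_of_norm_eq_one {R : Type*} [SeminormedRing R] [NormMulClass R]
    {a b : R} (ha : ‖a‖ = 1) (hb : ‖b‖ = 1) : Isometry (fun x => a * x * b) :=
  Isometry.of_dist_eq fun x y => by
    rw [dist_eq_norm, dist_eq_norm, ← sub_mul, ← mul_sub, norm_mul, norm_mul, ha, hb,
      one_mul, mul_one]

lemma Complex.det_linearMap (f : ℂ →ₗ[ℝ] ℂ) :
    LinearMap.det f = (f 1).re * (f Complex.I).im - (f Complex.I).re * (f 1).im := by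
  rw [← LinearMap.det_toMatrix Complex.basisOneI, Matrix.det_fin_two]
  simp [LinearMap.toMatrix_apply, Complex.coe_basisOneI_repr, Complex.coe_basisOneI]

lemma Complex.hausdorffMeasure_two_image_linearMap (f : ℂ →ₗ[ℝ] ℂ) (s : Set ℂ) :
    μH[(2 : ℝ)] (f '' s) = ENNReal.ofReal |LinearMap.det f| * μH[(2 : ℝ)] s := by
  have : (μH[(2 : ℝ)] : Measure ℂ).IsAddHaarMeasure := by
    rw [show (2 : ℝ) = (Module.finrank ℝ ℂ : ℝ) by simp [Complex.finrank_real_complex]]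
    infer_instance
  exact Measure.addHaar_image_linearMap _ f s

noncomputable def projE0MulMul (a b : ℍ[ℝ]) : ℂ →ₗ[ℝ] ℂ where
  toFun z := ⟨(a * z * b).re, (a * z * b).imI⟩
  map_add' z w := by
    apply Complex.ext <;> simp [coeComplex_add, mul_add, add_mul]
  map_smul' r z := by
    apply Complex.ext <;> (simp; ring)

lemma coeComplex_projE0MulMul (a b : ℍ[ℝ]) (z : ℂ) :
    ((projE0MulMul a b z : ℂ) : ℍ[ℝ]) = projE0 (a * z * b) :=
  rfl

lemma det_projE0MulMul {a b : ℍ[ℝ]} (ha : ‖a‖ = 1) (hb : ‖b‖ = 1) :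
    LinearMap.det (projE0MulMul a b) = a.re ^ 2 + a.imI ^ 2 + b.re ^ 2 + b.imI ^ 2 - 1 := by
  have ha' := normSq_eq_one_of_norm_eq_one ha
  have hb' := normSq_eq_one_of_norm_eq_one hb
  rw [normSq_def'] at ha' hb'
  rw [Complex.det_linearMap]
  simp only [projE0MulMul, LinearMap.coe_mk, AddHom.coe_mk, re_mul, imI_mul, imJ_mul, imK_mul,
    re_coeComplex, imI_coeComplex, imJ_coeComplex, imK_coeComplex, Complex.one_re,
    Complex.one_im, Complex.I_re, Complex.I_im]
  linear_combination (b.re ^ 2 + b.imI ^ 2 - 1) * ha' + (-a.imJ ^ 2 - a.imK ^ 2) * hb'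

lemma sphX_eq_of_norm_eq_one {q : ℍ[ℝ]} (hq : ‖q‖ = 1) : sphX q = q.re ^ 2 + q.imI ^ 2 := by
  have hq' := normSq_eq_one_of_norm_eq_one hq
  rw [normSq_def'] at hq'
  have hI : quatI = ((Complex.I : ℂ) : ℍ[ℝ]) := rfl
  simp only [sphX, inv_eq_star_of_norm_eq_one hq, hI, re_mul, imI_mul, imJ_mul, imK_mul,
    re_star, imI_star, imJ_star, imK_star, re_coeComplex, imI_coeComplex, imJ_coeComplex,
    imK_coeComplex, Complex.I_re, Complex.I_im]
  linear_combination (-1 / 2 : ℝ) * hq'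

theorem cos_angle_with_E0_eq_abs_x1_add_x2_sub_one_general
    [MeasurableSpace (Quaternion ℝ)] [BorelSpace (Quaternion ℝ)]
    (q₁ q₂ : Quaternion ℝ) (h₁ : ‖q₁‖ = 1) (h₂ : ‖q₂‖ = 1)
    (E : Set (Quaternion ℝ)) (hE : E = (fun x => q₁ * x * q₂⁻¹) '' planeE0)
    (A : Set (Quaternion ℝ)) (hA : A ⊆ E) :
    μH[(2 : ℝ)] (projE0 '' A)
      = ENNReal.ofReal |sphX q₁ + sphX q₂ - 1| * μH[(2 : ℝ)] A := by
  have hinv : ‖q₂⁻¹‖ = 1 := by rw [norm_inv, h₂, inv_one]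
  set F : ℂ → ℍ[ℝ] := fun z => q₁ * z * q₂⁻¹
  have hF : Isometry F := (isometry_mul_mul_of_norm_eq_one h₁ hinv).comp isometry_coeComplex
  have hAF : A ⊆ Set.range F := by
    rwa [hE, planeE0, ← range_coeComplex, ← Set.range_comp] at hA
  obtain ⟨S, rfl⟩ : ∃ S, F '' S = A := ⟨F ⁻¹' A, Set.image_preimage_eq_of_subset hAF⟩
  have hproj : projE0 '' (F '' S) = (↑) '' (projE0MulMul q₁ q₂⁻¹ '' S) := by
    simp only [Set.image_image, coeComplex_projE0MulMul, F]
  have hx₂ : sphX q₂ = q₂⁻¹.re ^ 2 + q₂⁻¹.imI ^ 2 := by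
    rw [sphX_eq_of_norm_eq_one h₂, inv_eq_star_of_norm_eq_one h₂, re_star, imI_star, neg_sq]
  rw [hproj, isometry_coeComplex.hausdorffMeasure_image (Or.inl zero_le_two),
    Complex.hausdorffMeasure_two_image_linearMap, det_projE0MulMul h₁ hinv,
    hF.hausdorffMeasure_image (Or.inl zero_le_two), sphX_eq_of_norm_eq_one h₁, hx₂]
  congr 3
  ring

/-- Lemma 3.2.1: under the identification of the Grassmannian of oriented
real 2-planes in `ℝ⁴ ≅ ℍ` with `S² × S²` coming from `Spin(4) = SU(2) × SU(2)` — the plane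
corresponding to `(t₁, t₂)` with `tᵢ = (xᵢ, yᵢ, zᵢ)` being `E = q₁ E₀ q₂⁻¹` where
`xⱼ = sphX qⱼ` — the cosine of the angle with `E₀ = span_ℝ{1, i}` is
`|cos(E, E₀)| = |x₁ + x₂ − 1|`, in the sense that orthogonal projection onto `E₀`
multiplies the 2-dimensional Hausdorff measure of subsets of `E` by this factor. -/
theorem cos_angle_with_E0_eq_abs_x1_add_x2_sub_one
    [MeasurableSpace (Quaternion ℝ)] [BorelSpace (Quaternion ℝ)]
    (q₁ q₂ : Quaternion ℝ) (h₁ : ‖q₁‖ = 1) (h₂ : ‖q₂‖ = 1)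
    (E : Set (Quaternion ℝ)) (hE : E = (fun x => q₁ * x * q₂⁻¹) '' planeE0)
    (A : Set (Quaternion ℝ)) (hA : A ⊆ E) (hAm : MeasurableSet A) :
    μH[(2 : ℝ)] (projE0 '' A)
      = ENNReal.ofReal |sphX q₁ + sphX q₂ - 1| * μH[(2 : ℝ)] A :=
  cos_angle_with_E0_eq_abs_x1_add_x2_sub_one_general q₁ q₂ h₁ h₂ E hE A hA
end
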